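/- Let M be an additive submonoid of ℤ² that is rationally supported. If M is nearly atomic then M is atomic. -/

import Mathlib

/-- An element of ℤ² invertible within the submonoid M. -/
def IsUnitIn (M : AddSubmonoid (ℤ × ℤ)) (x : ℤ × ℤ) : Prop :=
  x ∈ M ∧ -x ∈ M

/-- An atom of the submonoid M of ℤ². -/
def IsAtomIn (M : AddSubmonoid (ℤ × ℤ)) (a : ℤ × ℤ) : Prop :=
  a ∈ M ∧ ¬ IsUnitIn M a ∧
    ∀ r s : ℤ × ℤ, r ∈ M → s ∈ M → a = r + s → IsUnitIn M r ∨ IsUnitIn M s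

/-- The submonoid generated by the atoms of M. -/
def AtomicElems (M : AddSubmonoid (ℤ × ℤ)) : AddSubmonoid (ℤ × ℤ) :=
  AddSubmonoid.closure {a : ℤ × ℤ | IsAtomIn M a}

/-- M is atomic: every non-invertible element is a sum of atoms. -/
def IsAtomicMonoid (M : AddSubmonoid (ℤ × ℤ)) : Prop :=
  ∀ x ∈ M, ¬ IsUnitIn M x → x ∈ AtomicElems M

/-- M is nearly atomic. -/
def IsNearlyAtomic (M : AddSubmonoid (ℤ × ℤ)) : Prop :=
  ∃ b ∈ M, ∀ m ∈ M, b + m ∈ AtomicElems M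

/-- M is rationally supported. -/
def RationallySupported (M : AddSubmonoid (ℤ × ℤ)) : Prop :=
  ∃ a b : ℤ, (a ≠ 0 ∨ b ≠ 0) ∧ ∀ x ∈ M, 0 ≤ a * x.1 + b * x.2

/-!
Let `φ ≥ 0` be the supporting form and `ψ` a form with `ker φ ∩ ker ψ = 0`, so that an element
of the line `φ = 0` is determined by its `ψ`-value; the level of `x` is `φ x`.

If every element of `M` on that line is a unit, `φ` drops along every proper decomposition and
`M` is atomic by induction on `φ`. Otherwise `M` meets the line in a non-unit `y`. Then
`M ∩ {φ = 0}` lies on one side of `0` (otherwise it is a group), say `ψ ≥ 0` there, and `M` is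
reduced. Two atoms at the same level cannot differ by a positive multiple of `y`, so their
`ψ`-values are distinct modulo `ψ y` and each level carries finitely many atoms. Writing `c + m`
as a sum of atoms, with `c` the witness of near atomicity, bounds `ψ` from below on each level of
`M`; hence the lexicographic order of `(φ, ψ)` is well founded on `M`, and it drops along every
proper decomposition.
-/

section

variable {M : AddSubmonoid (ℤ × ℤ)} {φ ψ : ℤ × ℤ →+ ℤ}

lemma isUnitIn_zero (M : AddSubmonoid (ℤ × ℤ)) : IsUnitIn M 0 :=
  ⟨M.zero_mem, by simp⟩

lemma atomicElems_le (M : AddSubmonoid (ℤ × ℤ)) : AtomicElems M ≤ M :=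
  AddSubmonoid.closure_le.mpr fun _ ha => ha.1

lemma exists_add_of_not_isAtomIn {x : ℤ × ℤ} (hx : x ∈ M) (hxu : ¬IsUnitIn M x)
    (hat : ¬IsAtomIn M x) :
    ∃ r ∈ M, ∃ s ∈ M, ¬IsUnitIn M r ∧ ¬IsUnitIn M s ∧ x = r + s := by
  by_contra! h
  refine hat ⟨hx, hxu, fun r s hr hs he => ?_⟩
  by_contra! h'
  exact h r hr s hs h'.1 h'.2 he

lemma isAtomicMonoid_of_measure {α : Type*} [Preorder α] [WellFoundedLT α] (f : ℤ × ℤ → α)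
    (hf : ∀ r ∈ M, ∀ s ∈ M, ¬IsUnitIn M s → f r < f (r + s)) : IsAtomicMonoid M := by
  intro x
  induction x using (InvImage.wf f wellFounded_lt).induction with
  | _ x ih =>
  intro hx hxu
  by_cases hat : IsAtomIn M x
  · exact AddSubmonoid.subset_closure hat
  obtain ⟨r, hr, s, hs, hru, hsu, rfl⟩ := exists_add_of_not_isAtomIn hx hxu hat
  refine add_mem (ih r (hf r hr s hs hsu) hr hru) (ih s ?_ hs hsu)
  rw [add_comm]
  exact hf s hs r hr hru

lemma zsmul_mem_of_nonneg {x : ℤ × ℤ} {k : ℤ} (hx : x ∈ M) (hk : 0 ≤ k) : k • x ∈ M := by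
  lift k to ℕ using hk
  rw [natCast_zsmul]
  exact M.nsmul_mem hx k

lemma exists_addMonoidHom_injOn_line {a b : ℤ} (hab : a ≠ 0 ∨ b ≠ 0) :
    ∃ ψ : ℤ × ℤ →+ ℤ, ∀ z : ℤ × ℤ, a * z.1 + b * z.2 = 0 → ψ z = 0 → z = 0 := by
  rcases hab with ha | hb
  · refine ⟨AddMonoidHom.snd ℤ ℤ, fun ⟨z₁, z₂⟩ hz h₂ => ?_⟩
    simp only [AddMonoidHom.coe_snd] at h₂
    subst h₂
    simp [ha] at hz
    simp [hz]
  · refine ⟨AddMonoidHom.fst ℤ ℤ, fun ⟨z₁, z₂⟩ hz h₁ => ?_⟩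
    simp only [AddMonoidHom.coe_fst] at h₁
    subst h₁
    simp [hb] at hz
    simp [hz]

lemma isAtomicMonoid_of_forall_level_zero_isUnitIn (hsup : ∀ x ∈ M, 0 ≤ φ x)
    (hunit : ∀ z ∈ M, φ z = 0 → IsUnitIn M z) : IsAtomicMonoid M :=
  isAtomicMonoid_of_measure (fun x => (φ x).toNat) fun r hr s hs hsu => by
    have := hsup r hr
    have := (hsup s hs).lt_of_ne' fun h => hsu (hunit s hs h)
    simp only [map_add]
    omega

lemma neg_mem_of_level_zero (hinj : ∀ z, φ z = 0 → ψ z = 0 → z = 0) {s z : ℤ × ℤ}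
    (hz : z ∈ M) (hz0 : φ z = 0) (hzψ : ψ z < 0) (hs : s ∈ M) (hs0 : φ s = 0)
    (hsψ : 0 ≤ ψ s) : -s ∈ M := by
  have hprop : ψ z • s = ψ s • z :=
    sub_eq_zero.mp (hinj _ (by simp only [map_sub, map_zsmul, hs0, hz0, smul_zero, sub_self])
      (by rw [map_sub, map_zsmul, map_zsmul, smul_eq_mul, smul_eq_mul, mul_comm, sub_self]))
  have hneg : (-ψ z - 1) • s + ψ s • z = -s := by
    rw [sub_smul, neg_smul, ← hprop, one_smul]
    abel
  rw [← hneg]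
  exact add_mem (zsmul_mem_of_nonneg hs (by omega)) (zsmul_mem_of_nonneg hz hsψ)

lemma level_zero_nonneg_or_nonpos (hinj : ∀ z, φ z = 0 → ψ z = 0 → z = 0) {y : ℤ × ℤ}
    (hy : y ∈ M) (hy0 : φ y = 0) (hyu : ¬IsUnitIn M y) :
    (∀ z ∈ M, φ z = 0 → 0 ≤ ψ z) ∨ (∀ z ∈ M, φ z = 0 → ψ z ≤ 0) := by
  by_contra! ⟨⟨z, hz, hz0, hzψ⟩, ⟨z', hz', hz'0, hz'ψ⟩⟩
  refine hyu ⟨hy, ?_⟩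
  rcases le_or_gt 0 (ψ y) with h | h
  · exact neg_mem_of_level_zero hinj hz hz0 hzψ hy hy0 h
  · exact neg_mem_of_level_zero (ψ := -ψ) (fun x h0 h1 => hinj x h0 (neg_eq_zero.mp h1))
      hz' hz'0 (by simpa using hz'ψ) hy hy0 (by simp; omega)

lemma nonneg_of_mem_atomicElems {χ : ℤ × ℤ →+ ℤ} (hsup : ∀ x ∈ M, 0 ≤ φ x) {H : ℤ}
    (hχ : ∀ α, IsAtomIn M α → φ α ≤ H → 0 ≤ χ α) {m : ℤ × ℤ} (hm : m ∈ AtomicElems M) :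
    φ m ≤ H → 0 ≤ χ m := by
  induction hm using AddSubmonoid.closure_induction with
  | mem α hα => exact hχ α hα
  | zero => simp
  | add x y hx hy ihx ihy =>
    intro hxy
    have := hsup x (atomicElems_le M hx)
    have := hsup y (atomicElems_le M hy)
    rw [map_add] at hxy ⊢
    have := ihx (by omega)
    have := ihy (by omega)
    omega

lemma eq_zero_of_isUnitIn (hsup : ∀ x ∈ M, 0 ≤ φ x) (hinj : ∀ z, φ z = 0 → ψ z = 0 → z = 0)
    (hψ : ∀ z ∈ M, φ z = 0 → 0 ≤ ψ z) {u : ℤ × ℤ} (hu : IsUnitIn M u) : u = 0 := by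
  have h₁ := hsup u hu.1
  have h₂ := hsup _ hu.2
  rw [map_neg] at h₂
  have hu0 : φ u = 0 := by omega
  have h₃ := hψ u hu.1 hu0
  have h₄ := hψ _ hu.2 (by rw [map_neg, hu0, neg_zero])
  rw [map_neg] at h₄
  exact hinj u hu0 (by omega)

lemma one_le_of_level_zero (hinj : ∀ z, φ z = 0 → ψ z = 0 → z = 0)
    (hψ : ∀ z ∈ M, φ z = 0 → 0 ≤ ψ z) {z : ℤ × ℤ} (hz : z ∈ M) (hz0 : φ z = 0)
    (hzu : ¬IsUnitIn M z) : 1 ≤ ψ z := by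
  have := hψ z hz hz0
  have : ψ z ≠ 0 := fun h => hzu (hinj z hz0 h ▸ isUnitIn_zero M)
  omega

lemma eq_of_isAtomIn_of_eq_add_nsmul (hsup : ∀ x ∈ M, 0 ≤ φ x)
    (hinj : ∀ z, φ z = 0 → ψ z = 0 → z = 0) (hψ : ∀ z ∈ M, φ z = 0 → 0 ≤ ψ z)
    {α β y : ℤ × ℤ} {n : ℕ} (hα : IsAtomIn M α) (hβ : β ∈ M) (hβu : ¬IsUnitIn M β)
    (hy : y ∈ M) (h : α = β + n • y) : α = β := by
  rcases hα.2.2 β (n • y) hβ (M.nsmul_mem hy n) h with hu | hu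
  · exact absurd hu hβu
  · rwa [eq_zero_of_isUnitIn hsup hinj hψ hu, add_zero] at h

lemma finite_setOf_isAtomIn_level (hsup : ∀ x ∈ M, 0 ≤ φ x)
    (hinj : ∀ z, φ z = 0 → ψ z = 0 → z = 0) (hψ : ∀ z ∈ M, φ z = 0 → 0 ≤ ψ z)
    {y : ℤ × ℤ} (hy : y ∈ M) (hy0 : φ y = 0) (hyu : ¬IsUnitIn M y) (v : ℤ) :
    {α | IsAtomIn M α ∧ φ α = v}.Finite := by
  have hp : 0 < ψ y := one_le_of_level_zero hinj hψ hy hy0 hyu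
  refine (Set.finite_Ico 0 (ψ y)).of_injOn (f := fun α => ψ α % ψ y)
    (fun α _ => Set.mem_Ico.mpr ⟨Int.emod_nonneg _ hp.ne', Int.emod_lt_of_pos _ hp⟩) ?_
  intro α ⟨hα, hαv⟩ β ⟨hβ, hβv⟩ hmod
  wlog hle : ψ β ≤ ψ α generalizing α β
  · exact (this hβ hβv hα hαv hmod.symm (le_of_not_ge hle)).symm
  obtain ⟨t, ht⟩ : ψ y ∣ ψ α - ψ β := Int.ModEq.dvd hmod.symm
  have ht0 : 0 ≤ t := nonneg_of_mul_nonneg_right (ht ▸ sub_nonneg.mpr hle) hp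
  lift t to ℕ using ht0
  refine eq_of_isAtomIn_of_eq_add_nsmul hsup hinj hψ hα hβ.1 hβ.2.1 hy (n := t) ?_
  rw [← sub_eq_zero]
  refine hinj _ (by simp only [map_sub, map_add, map_nsmul, hαv, hβv, hy0, smul_zero, add_zero,
    sub_self]) ?_
  rw [map_sub, map_add, map_nsmul, nsmul_eq_mul]
  linear_combination ht

lemma finite_setOf_isAtomIn_level_le (hsup : ∀ x ∈ M, 0 ≤ φ x)
    (hinj : ∀ z, φ z = 0 → ψ z = 0 → z = 0) (hψ : ∀ z ∈ M, φ z = 0 → 0 ≤ ψ z)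
    {y : ℤ × ℤ} (hy : y ∈ M) (hy0 : φ y = 0) (hyu : ¬IsUnitIn M y) (H : ℤ) :
    {α | IsAtomIn M α ∧ φ α ≤ H}.Finite :=
  ((Set.finite_Icc 0 H).biUnion fun v _ =>
      finite_setOf_isAtomIn_level hsup hinj hψ hy hy0 hyu v).subset
    fun α ⟨hα, hαH⟩ => Set.mem_biUnion ⟨hsup α hα.1, hαH⟩ ⟨hα, rfl⟩

lemma bddBelow_image_level (hsup : ∀ x ∈ M, 0 ≤ φ x)
    (hinj : ∀ z, φ z = 0 → ψ z = 0 → z = 0) (hψ : ∀ z ∈ M, φ z = 0 → 0 ≤ ψ z)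
    {y : ℤ × ℤ} (hy : y ∈ M) (hy0 : φ y = 0) (hyu : ¬IsUnitIn M y) (hNA : IsNearlyAtomic M)
    (k : ℤ) : BddBelow (ψ '' {m | m ∈ M ∧ φ m = k}) := by
  obtain ⟨c, hc, hcA⟩ := hNA
  obtain ⟨L, hL⟩ :=
    ((finite_setOf_isAtomIn_level_le hsup hinj hψ hy hy0 hyu (φ c + k)).image ψ).bddBelow
  set K := max (-L) 0
  -- `ψ + K • φ` is nonnegative on the atoms of level at most `φ c + k`, hence on each `c + m`
  have hχ : ∀ α, IsAtomIn M α → φ α ≤ φ c + k → 0 ≤ (ψ + K • φ) α := by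
    intro α hα hαH
    have hLα := hL ⟨α, ⟨hα, hαH⟩, rfl⟩
    simp only [AddMonoidHom.add_apply, AddMonoidHom.smul_apply, smul_eq_mul]
    rcases (hsup α hα.1).eq_or_lt with h | h
    · rw [← h, mul_zero, add_zero]
      exact hψ α hα.1 h.symm
    · nlinarith [le_max_left (-L) 0, le_max_right (-L) 0]
  refine ⟨-ψ c - K * (φ c + k), ?_⟩
  rintro _ ⟨m, ⟨hm, hmk⟩, rfl⟩
  have := nonneg_of_mem_atomicElems hsup hχ (hcA m hm) (by rw [map_add, hmk])
  simp only [AddMonoidHom.add_apply, AddMonoidHom.smul_apply, smul_eq_mul, map_add, hmk] at this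
  linarith

lemma isAtomicMonoid_of_level_zero_nonneg (hsup : ∀ x ∈ M, 0 ≤ φ x)
    (hinj : ∀ z, φ z = 0 → ψ z = 0 → z = 0) (hψ : ∀ z ∈ M, φ z = 0 → 0 ≤ ψ z)
    {y : ℤ × ℤ} (hy : y ∈ M) (hy0 : φ y = 0) (hyu : ¬IsUnitIn M y) (hNA : IsNearlyAtomic M) :
    IsAtomicMonoid M := by
  choose B hB using bddBelow_image_level hsup hinj hψ hy hy0 hyu hNA
  refine isAtomicMonoid_of_measure (fun x => toLex ((φ x).toNat, (ψ x - B (φ x)).toNat))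
    fun r hr s hs hsu => ?_
  have hr0 := hsup r hr
  have hrB := hB (φ r) ⟨r, ⟨hr, rfl⟩, rfl⟩
  simp only [map_add, Prod.Lex.toLex_lt_toLex]
  rcases (hsup s hs).eq_or_lt with h | h
  · have := one_le_of_level_zero hinj hψ hs h.symm hsu
    rw [← h, add_zero]
    right
    omega
  · left
    omega

end

/-- A rationally supported nearly atomic submonoid of ℤ² is atomic. -/
theorem rationally_supported_nearly_atomic_implies_atomic
    (M : AddSubmonoid (ℤ × ℤ)) (hM : RationallySupported M)
    (hNA : IsNearlyAtomic M) :
    IsAtomicMonoid M := by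
  obtain ⟨a, b, hab, hsup⟩ := hM
  set φ : ℤ × ℤ →+ ℤ := a • AddMonoidHom.fst ℤ ℤ + b • AddMonoidHom.snd ℤ ℤ
  obtain ⟨ψ, hinj⟩ := exists_addMonoidHom_injOn_line hab
  by_cases hunit : ∀ z ∈ M, φ z = 0 → IsUnitIn M z
  · exact isAtomicMonoid_of_forall_level_zero_isUnitIn hsup hunit
  push Not at hunit
  obtain ⟨y, hy, hy0, hyu⟩ := hunit
  rcases level_zero_nonneg_or_nonpos hinj hy hy0 hyu with hψ | hψ
  · exact isAtomicMonoid_of_level_zero_nonneg hsup hinj hψ hy hy0 hyu hNA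
  · exact isAtomicMonoid_of_level_zero_nonneg (ψ := -ψ) hsup
      (fun z h0 h1 => hinj z h0 (neg_eq_zero.mp h1))
      (fun z hz h0 => neg_nonneg.mpr (hψ z hz h0)) hy hy0 hyu hNA
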